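/- If X and Y are two critical independent sets of a graph G, then |N(X) ∩ Y| = |N(Y) ∩ X|. -/

import Mathlib

open Classical Finset

/-- Neighborhood of a set of vertices: all vertices adjacent to some vertex of `X`. -/
noncomputable def nbhd {V : Type*} (G : SimpleGraph V) [Fintype V] (X : Finset V) : Finset V :=
  Finset.univ.filter (fun v => ∃ x ∈ X, G.Adj x v)

/-- The difference `d(X) = |X| - |N(X)|`. -/
noncomputable def gdiff {V : Type*} (G : SimpleGraph V) [Fintype V] (X : Finset V) : ℤ :=
  (X.card : ℤ) - ((nbhd G X).card : ℤ)

/-- `X` is an independent set of `G`. -/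
def IsIndep {V : Type*} (G : SimpleGraph V) (X : Finset V) : Prop :=
  ∀ x ∈ X, ∀ y ∈ X, ¬ G.Adj x y

/-- The critical difference `d_c(G) = max { d(X) : X ⊆ V(G) }`. -/
noncomputable def critDiff {V : Type*} (G : SimpleGraph V) [Fintype V] : ℤ :=
  Finset.univ.powerset.sup' ⟨∅, Finset.empty_mem_powerset _⟩ (gdiff G)

/-- `X` is a critical set of `G`. -/
noncomputable def IsCritical {V : Type*} (G : SimpleGraph V) [Fintype V] (X : Finset V) : Prop :=
  gdiff G X = critDiff G

/-- `ker G` : the intersection of all critical sets of `G`. -/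
noncomputable def kerG {V : Type*} (G : SimpleGraph V) [Fintype V] : Finset V :=
  Finset.univ.filter (fun v => ∀ X : Finset V, IsCritical G X → v ∈ X)

/-- `diadem G` : the union of all critical independent sets of `G`. -/
noncomputable def diademG {V : Type*} (G : SimpleGraph V) [Fintype V] : Finset V :=
  Finset.univ.filter (fun v => ∃ X : Finset V, IsCritical G X ∧ IsIndep G X ∧ v ∈ X)

/-- The independence number `α(G)`. -/
noncomputable def alphaG {V : Type*} (G : SimpleGraph V) [Fintype V] : ℕ :=
  (Finset.univ.powerset.filter (IsIndep G)).sup Finset.card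

/-- `core G` : the intersection of all maximum independent sets of `G`. -/
noncomputable def coreG {V : Type*} (G : SimpleGraph V) [Fintype V] : Finset V :=
  Finset.univ.filter (fun v => ∀ I : Finset V, IsIndep G I → I.card = alphaG G → v ∈ I)

/-- `M` is a matching of `G`, given as a finite set of pairwise disjoint edges of `G`. -/
def IsMatchingF {V : Type*} (G : SimpleGraph V) (M : Finset (Sym2 V)) : Prop :=
  (↑M : Set (Sym2 V)) ⊆ G.edgeSet ∧
    ∀ e₁ ∈ M, ∀ e₂ ∈ M, e₁ ≠ e₂ → ∀ v : V, v ∈ e₁ → v ∉ e₂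

/-- The matching number `μ(G)`. -/
noncomputable def matchNum {V : Type*} (G : SimpleGraph V) [Fintype V] : ℕ :=
  ((Finset.univ : Finset (Finset (Sym2 V))).filter (IsMatchingF G)).sup Finset.card

/-- There is a matching from `A` into `B`: an injection of `A` into `B` along edges of `G`. -/
def MatchingFromInto {V : Type*} (G : SimpleGraph V) (A B : Finset V) : Prop :=
  ∃ f : V → V, Set.InjOn f ↑A ∧ ∀ a ∈ A, f a ∈ B ∧ G.Adj a (f a)

/-- The auxiliary bipartite graph `H_X` on vertex set `X ∪ N(X) ∪ {v, w}`, where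
`v = Sum.inr false` and `w = Sum.inr true`.  Its edges are the edges of `G` between
`X` and `N(X)`, the edge `vw`, and all edges from `v` to `N(X)`. -/
noncomputable def HX {V : Type*} (G : SimpleGraph V) [Fintype V] (X : Finset V) :
    SimpleGraph ({a : V // a ∈ X ∪ nbhd G X} ⊕ Bool) :=
  SimpleGraph.fromRel (fun p q =>
    match p, q with
    | Sum.inl a, Sum.inl b => a.1 ∈ X ∧ b.1 ∈ nbhd G X ∧ G.Adj a.1 b.1
    | Sum.inr false, Sum.inr true => True
    | Sum.inr false, Sum.inl b => b.1 ∈ nbhd G X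
    | _, _ => False)

/-- The copy of `X` inside the vertex set of `H_X`. -/
noncomputable def Xlift {V : Type*} (G : SimpleGraph V) [Fintype V] (X : Finset V) :
    Finset ({a : V // a ∈ X ∪ nbhd G X} ⊕ Bool) :=
  Finset.univ.filter (fun p => ∃ a : {a : V // a ∈ X ∪ nbhd G X}, p = Sum.inl a ∧ a.1 ∈ X)

/-- Edmonds–Gallai set `D`: vertices missed by some maximum matching. -/
noncomputable def gallaiD {V : Type*} (G : SimpleGraph V) [Fintype V] : Finset V :=
  Finset.univ.filter (fun v => ∃ M : Finset (Sym2 V),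
    IsMatchingF G M ∧ M.card = matchNum G ∧ ∀ e ∈ M, v ∉ e)

/-- Edmonds–Gallai set `A = N(D) - D`. -/
noncomputable def gallaiA {V : Type*} (G : SimpleGraph V) [Fintype V] : Finset V :=
  nbhd G (gallaiD G) \ gallaiD G

/-- Edmonds–Gallai set `C = V - A - D`. -/
noncomputable def gallaiC {V : Type*} (G : SimpleGraph V) [Fintype V] : Finset V :=
  (Finset.univ \ gallaiD G) \ gallaiA G

/-- The vertices of the singleton components of `G[D]`. -/
noncomputable def singlesD {V : Type*} (G : SimpleGraph V) [Fintype V] : Finset V :=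
  (gallaiD G).filter (fun v => ∀ w ∈ gallaiD G, ¬ G.Adj v w)

/-! By Hall's theorem a critical set `S` admits a matching from `N(S)`
into `S`: if some `T ⊆ N(S)` had fewer than `|T|` neighbours in `S`, removing them from `S` would
increase `d`. For critical `Y`, such a matching sends `N(Y) ∩ X` injectively into `N(X) ∩ Y`;
exchanging the roles of `X` and `Y` gives the equality. -/

@[simp]
lemma mem_nbhd {V : Type*} {G : SimpleGraph V} [Fintype V] {X : Finset V} {v : V} :
    v ∈ nbhd G X ↔ ∃ x ∈ X, G.Adj x v := by
  simp [nbhd]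

lemma gdiff_le_critDiff {V : Type*} (G : SimpleGraph V) [Fintype V] (Z : Finset V) :
    gdiff G Z ≤ critDiff G :=
  le_sup' (gdiff G) (mem_powerset.2 (subset_univ Z))

lemma nbhd_sdiff_nbhd_subset {V : Type*} (G : SimpleGraph V) [Fintype V] [DecidableEq V]
    (S T : Finset V) : nbhd G (S \ nbhd G T) ⊆ nbhd G S \ T := by
  intro u hu
  obtain ⟨s, hs, hsu⟩ := mem_nbhd.1 hu
  obtain ⟨hsS, hsT⟩ := mem_sdiff.1 hs
  exact mem_sdiff.2 ⟨mem_nbhd.2 ⟨s, hsS, hsu⟩, fun huT => hsT (mem_nbhd.2 ⟨u, huT, hsu.symm⟩)⟩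

lemma IsCritical.card_le_card_nbhd_inter {V : Type*} {G : SimpleGraph V} [Fintype V]
    [DecidableEq V] {S T : Finset V} (hS : IsCritical G S) (hT : T ⊆ nbhd G S) :
    #T ≤ #(nbhd G T ∩ S) := by
  have hd : gdiff G (S \ nbhd G T) ≤ gdiff G S := hS ▸ gdiff_le_critDiff G _
  have hN : #(nbhd G (S \ nbhd G T)) ≤ #(nbhd G S) - #T := by
    rw [← card_sdiff_of_subset hT]
    exact card_le_card (nbhd_sdiff_nbhd_subset G S T)
  have hsplit := card_sdiff_add_card_inter S (nbhd G T)
  have hTN := card_le_card hT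
  rw [inter_comm] at hsplit
  unfold gdiff at hd
  omega

lemma IsCritical.matchingFromInto_nbhd {V : Type*} {G : SimpleGraph V} [Fintype V]
    [DecidableEq V] {S : Finset V} (hS : IsCritical G S) : MatchingFromInto G (nbhd G S) S := by
  obtain ⟨f, hf_inj, hf⟩ :=
    (Fintype.all_card_le_filter_rel_iff_exists_injective
      (fun (a : nbhd G S) (b : V) => G.Adj a b ∧ b ∈ S)).1 fun A => by
      have hfilter : ({b | ∃ a ∈ A, G.Adj a b ∧ b ∈ S} : Finset V) =
          nbhd G (A.map (.subtype _)) ∩ S := by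
        ext b
        simp [← and_assoc, exists_and_right]
      rw [hfilter, ← card_map (.subtype _)]
      exact hS.card_le_card_nbhd_inter fun v hv => by
        obtain ⟨a, -, rfl⟩ := mem_map.1 hv
        exact a.2
  refine ⟨fun v => if hv : v ∈ nbhd G S then f ⟨v, hv⟩ else v, ?_, fun v hv => ?_⟩
  · intro v hv w hw hvw
    simp only [mem_coe] at hv hw
    simp only [dif_pos hv, dif_pos hw] at hvw
    exact congrArg Subtype.val (hf_inj hvw)
  · simpa only [dif_pos hv] using (hf ⟨v, hv⟩).symm

lemma MatchingFromInto.card_inter_le {V : Type*} {G : SimpleGraph V} [Fintype V]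
    [DecidableEq V] {A B : Finset V} (hAB : MatchingFromInto G A B) (X : Finset V) :
    #(A ∩ X) ≤ #(nbhd G X ∩ B) := by
  obtain ⟨f, hf_inj, hf⟩ := hAB
  refine card_le_card_of_injOn f (fun v hv => ?_) (hf_inj.mono fun v hv => (mem_inter.1 hv).1)
  obtain ⟨hvA, hvX⟩ := mem_inter.1 hv
  obtain ⟨hfB, hadj⟩ := hf v hvA
  exact mem_inter.2 ⟨mem_nbhd.2 ⟨v, hvX, hadj⟩, hfB⟩

theorem stmt10_general {V : Type*} (G : SimpleGraph V) [Fintype V] [DecidableEq V]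
    (X Y : Finset V) (hXc : IsCritical G X)
    (hYc : IsCritical G Y) :
    (nbhd G X ∩ Y).card = (nbhd G Y ∩ X).card :=
  le_antisymm (hXc.matchingFromInto_nbhd.card_inter_le Y)
    (hYc.matchingFromInto_nbhd.card_inter_le X)

/-- for critical independent sets `X`, `Y`, `|N(X) ∩ Y| = |N(Y) ∩ X|`. -/
theorem stmt10 {V : Type*} (G : SimpleGraph V) [Fintype V] [DecidableEq V] [DecidableRel G.Adj]
    (X Y : Finset V) (hXc : IsCritical G X) (hXi : IsIndep G X)
    (hYc : IsCritical G Y) (hYi : IsIndep G Y) :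
    (nbhd G X ∩ Y).card = (nbhd G Y ∩ X).card :=
  stmt10_general G X Y hXc hYc
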